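/- Let L > 0 and T > 0. Then there exists a constant c_T > 0, depending only on T and L, such that for all x, y ∈ [0, L] and all 0 < t ≤ T, p_N(t, x, y) ≤ c_T·p(t, x, y). -/
import Mathlib


noncomputable def pN (L t x y : ℝ) : ℝ :=
  (∑' n : ℤ, (Real.exp (-(x - y - 2 * (n : ℝ) * L) ^ 2 / (4 * t))
      + Real.exp (-(x + y - 2 * (n : ℝ) * L) ^ 2 / (4 * t)))) / Real.sqrt (4 * Real.pi * t)

noncomputable def pG (t x y : ℝ) : ℝ :=
  Real.exp (-(x - y) ^ 2 / (4 * t)) / Real.sqrt (4 * Real.pi * t)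

lemma exp_term_le {t T u d a : ℝ} (ht : 0 < t) (htT : t ≤ T) (ha : 0 ≤ a)
    (h : u ^ 2 + 4 * T * a ≤ d ^ 2) :
    Real.exp (-d ^ 2 / (4 * t)) ≤ Real.exp (-u ^ 2 / (4 * t)) * Real.exp (-a) := by
  rw [← Real.exp_add]
  apply Real.exp_le_exp.mpr
  have h4t : (0:ℝ) < 4 * t := by linarith
  have e2 : (u ^ 2 + 4 * T * a) / (4 * t) ≤ d ^ 2 / (4 * t) := by gcongr
  have e3 : (u ^ 2 + 4 * T * a) / (4 * t) = u ^ 2 / (4 * t) + (T / t) * a := by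
    field_simp
  have e4 : a ≤ (T / t) * a := by
    have : (1:ℝ) ≤ T / t := (one_le_div ht).mpr htT
    nlinarith
  have e5 : -d ^ 2 / (4 * t) = -(d ^ 2 / (4 * t)) := neg_div _ _
  have e6 : -u ^ 2 / (4 * t) = -(u ^ 2 / (4 * t)) := neg_div _ _
  linarith

lemma int_fact (n : ℤ) : 0 ≤ ((n:ℝ) - 1) * ((n:ℝ) - 2) := by
  rcases le_or_gt n 1 with h | h
  · have : (n:ℝ) ≤ 1 := by exact_mod_cast h
    nlinarith
  · have : (2:ℝ) ≤ (n:ℝ) := by exact_mod_cast h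
    nlinarith

lemma geom (L x y : ℝ) (hL : 0 < L) (hx0 : 0 ≤ x) (hxL : x ≤ L)
    (hy0 : 0 ≤ y) (hyL : y ≤ L) (n : ℤ) :
    (x - y) ^ 2 + 4 * L ^ 2 * max (|(n:ℝ)| - 1) 0 ≤ (x - y - 2 * (n:ℝ) * L) ^ 2 ∧
    (x - y) ^ 2 + 4 * L ^ 2 * max (|(n:ℝ)| - 1) 0 ≤ (x + y - 2 * (n:ℝ) * L) ^ 2 := by
  rcases lt_trichotomy n 0 with h | h | h
  · -- n ≤ -1
    have hn : (n:ℝ) ≤ -1 := by exact_mod_cast (show n ≤ -1 by omega)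
    have habs : |(n:ℝ)| = -(n:ℝ) := abs_of_neg (by linarith)
    have hmax : max (|(n:ℝ)| - 1) 0 = -(n:ℝ) - 1 := by
      rw [habs]; exact max_eq_left (by linarith)
    rw [hmax]
    constructor
    · nlinarith [mul_nonneg (mul_nonneg (by linarith : (0:ℝ) ≤ -(n:ℝ)) hL.le)
        (by linarith : (0:ℝ) ≤ L + (x - y)), sq_nonneg (L * ((n:ℝ) + 1))]
    · nlinarith [mul_nonneg (mul_nonneg (by linarith : (0:ℝ) ≤ -(n:ℝ)) hL.le)
        (by linarith : (0:ℝ) ≤ x + y), sq_nonneg (L * ((n:ℝ) + 1)), mul_nonneg hx0 hy0,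
        sq_nonneg ((n:ℝ) * L)]
  · subst h
    simp only [Int.cast_zero, abs_zero]
    rw [max_eq_right (by norm_num)]
    constructor
    · nlinarith
    · nlinarith [mul_nonneg hx0 hy0]
  · -- n ≥ 1
    have hn : (1:ℝ) ≤ (n:ℝ) := by exact_mod_cast (show 1 ≤ n by omega)
    have habs : |(n:ℝ)| = (n:ℝ) := abs_of_pos (by linarith)
    have hmax : max (|(n:ℝ)| - 1) 0 = (n:ℝ) - 1 := by
      rw [habs]; exact max_eq_left (by linarith)
    rw [hmax]
    constructor
    · nlinarith [mul_nonneg (mul_nonneg (by linarith : (0:ℝ) ≤ (n:ℝ)) hL.le)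
        (by linarith : (0:ℝ) ≤ L - (x - y)), sq_nonneg (L * ((n:ℝ) - 1))]
    · nlinarith [mul_nonneg (mul_nonneg (by linarith : (0:ℝ) ≤ (n:ℝ) - 1) hL.le)
        (by linarith : (0:ℝ) ≤ 2 * L - x - y), sq_nonneg (L * ((n:ℝ) - 1)),
        int_fact n, mul_nonneg hx0 hy0,
        mul_nonneg (mul_nonneg (int_fact n) (sq_nonneg L)) (by norm_num : (0:ℝ) ≤ 4),
        sq_nonneg (2 * L - x - y), sq_nonneg (x - y)]

theorem stmt_13 (L T : ℝ) (hL : 0 < L) (hT : 0 < T) :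
    ∃ c : ℝ, 0 < c ∧ ∀ x ∈ Set.Icc (0:ℝ) L, ∀ y ∈ Set.Icc (0:ℝ) L,
      ∀ t : ℝ, 0 < t → t ≤ T → pN L t x y ≤ c * pG t x y := by
  set K := L ^ 2 / T with hK
  have hKpos : 0 < K := div_pos (pow_pos hL 2) hT
  set g : ℤ → ℝ := fun n => Real.exp (-(K * max (|(n:ℝ)| - 1) 0)) with hg
  -- summability of the majorant
  have hgsum : Summable g := by
    have hr1 : Real.exp (-K) < 1 := Real.exp_lt_one_iff.mpr (by linarith)
    have hbound : ∀ n : ℤ, g n ≤ Real.exp K * Real.exp (-K) ^ n.natAbs := by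
      intro n
      rw [hg, ← Real.exp_nat_mul, ← Real.exp_add]
      apply Real.exp_le_exp.mpr
      have h1 : (|(n:ℝ)| : ℝ) = (n.natAbs : ℝ) := by
        rw [Nat.cast_natAbs, Int.cast_abs]
      have h2 : (|(n:ℝ)|) - 1 ≤ max (|(n:ℝ)| - 1) 0 := le_max_left _ _
      nlinarith [le_max_right (|(n:ℝ)| - 1) (0:ℝ)]
    apply Summable.of_nonneg_of_le (fun n => (Real.exp_pos _).le) hbound
    apply Summable.of_nat_of_neg
    · simpa using ((summable_geometric_of_lt_one (Real.exp_pos _).le hr1).mul_left (Real.exp K))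
    · simpa using ((summable_geometric_of_lt_one (Real.exp_pos _).le hr1).mul_left (Real.exp K))
  set S := ∑' n : ℤ, g n with hS
  have hSpos : 0 < S := Summable.tsum_pos hgsum (fun n => (Real.exp_pos _).le) 0 (Real.exp_pos _)
  refine ⟨2 * S, by linarith, ?_⟩
  rintro x ⟨hx0, hxL⟩ y ⟨hy0, hyL⟩ t ht htT
  -- per-term bound
  set F : ℤ → ℝ := fun n => Real.exp (-(x - y - 2 * (n : ℝ) * L) ^ 2 / (4 * t))
      + Real.exp (-(x + y - 2 * (n : ℝ) * L) ^ 2 / (4 * t)) with hF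
  set E := Real.exp (-(x - y) ^ 2 / (4 * t)) with hE
  have hFG : ∀ n : ℤ, F n ≤ (E * 2) * g n := by
    intro n
    obtain ⟨g1, g2⟩ := geom L x y hL hx0 hxL hy0 hyL n
    have hMnn : (0:ℝ) ≤ max (|(n:ℝ)| - 1) 0 := le_max_right _ _
    have ha : 0 ≤ K * max (|(n:ℝ)| - 1) 0 := mul_nonneg hKpos.le hMnn
    have key : 4 * T * (K * max (|(n:ℝ)| - 1) 0) = 4 * L ^ 2 * max (|(n:ℝ)| - 1) 0 := by
      rw [hK]; field_simp
    have b1 : Real.exp (-(x - y - 2 * (n : ℝ) * L) ^ 2 / (4 * t)) ≤ E * g n := by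
      exact exp_term_le ht htT ha (by rw [key]; exact g1)
    have b2 : Real.exp (-(x + y - 2 * (n : ℝ) * L) ^ 2 / (4 * t)) ≤ E * g n := by
      exact exp_term_le ht htT ha (by rw [key]; exact g2)
    have : F n = Real.exp (-(x - y - 2 * (n : ℝ) * L) ^ 2 / (4 * t))
        + Real.exp (-(x + y - 2 * (n : ℝ) * L) ^ 2 / (4 * t)) := rfl
    rw [this]; linarith
  have hFnn : ∀ n : ℤ, 0 ≤ F n := by
    intro n
    have : F n = Real.exp (-(x - y - 2 * (n : ℝ) * L) ^ 2 / (4 * t))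
        + Real.exp (-(x + y - 2 * (n : ℝ) * L) ^ 2 / (4 * t)) := rfl
    rw [this]; positivity
  have hGsum : Summable (fun n : ℤ => (E * 2) * g n) := hgsum.mul_left _
  have hFsum : Summable F := hGsum.of_nonneg_of_le hFnn hFG
  have htsum : (∑' n : ℤ, F n) ≤ (E * 2) * S := by
    rw [hS, ← tsum_mul_left]
    exact Summable.tsum_le_tsum hFG hFsum hGsum
  have hsqrt : 0 ≤ Real.sqrt (4 * Real.pi * t) := Real.sqrt_nonneg _
  have : pN L t x y = (∑' n : ℤ, F n) / Real.sqrt (4 * Real.pi * t) := rfl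
  rw [this, pG, mul_div_assoc']
  have h2 : (E * 2) * S = 2 * S * Real.exp (-(x - y) ^ 2 / (4 * t)) := by rw [hE]; ring
  gcongr
  exact htsum.trans_eq h2
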